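/- Let d ≥ 1, let ρ > 0, L_g > 0, and γ > 0 satisfy γρ < 1 and γL_g < 1. Let g : ℝ^d → ℝ be ρ-weakly convex and twice continuously differentiable, and suppose that the Hessian of g satisfies ‖∇²g(z)‖ ≤ L_g (in operator norm) for every z in the image Prox_{γg}(ℝ^d). Then for every x ∈ ℝ^d the linear map I + γ∇²g(Prox_{γg}(x)) is invertible, Prox_{γg} is differentiable at x with derivative ∇Prox_{γg}(x) = (I + γ∇²g(Prox_{γg}(x)))⁻¹, and the Moreau envelope g^γ is twice differentiable at x with Hessian ∇²g^γ(x) = (1/γ)(I − (I + γ∇²g(Prox_{γg}(x)))⁻¹). -/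

import Mathlib

/-!
By weak convexity `F y = y + γ • ∇g y` is `(1 - γρ)`-strongly monotone, and the optimality
condition of the proximal problem says `F (prox x) = x`. So `prox` is a Lipschitz right inverse of
the injective map `F`. The derivative `I + γ∇²g` of `F` inherits the monotonicity bound, hence is
coercive and invertible by Lax–Milgram, and the inverse function theorem differentiates `prox`.
The envelope lies below each of its linearizations `u ↦ e w + ⟪(w - prox w)/γ, u - w⟫` plus
`‖u - w‖²/(2γ)`; applied at both endpoints, this pins its gradient once `prox` is continuous.
-/

open scoped RealInnerProductSpace
open Filter Topology

section ProximalMap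

variable {E : Type*} [NormedAddCommGroup E]

def IsProximalMap (γ : ℝ) (g : E → ℝ) (prox : E → E) : Prop :=
  ∀ x y, 1 / (2 * γ) * ‖x - prox x‖ ^ 2 + g (prox x) ≤
    1 / (2 * γ) * ‖x - y‖ ^ 2 + g y

noncomputable def moreauEnvelope (γ : ℝ) (g : E → ℝ) (x : E) : ℝ :=
  ⨅ y, 1 / (2 * γ) * ‖x - y‖ ^ 2 + g y

variable {γ : ℝ} {g : E → ℝ} {prox : E → E}

theorem IsProximalMap.moreauEnvelope_eq (hprox : IsProximalMap γ g prox) (x : E) :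
    moreauEnvelope γ g x = 1 / (2 * γ) * ‖x - prox x‖ ^ 2 + g (prox x) :=
  IsGLB.ciInf_eq (IsLeast.isGLB ⟨⟨prox x, rfl⟩, by rintro _ ⟨y, rfl⟩; exact hprox x y⟩)

end ProximalMap

variable {E : Type*} [NormedAddCommGroup E] [InnerProductSpace ℝ E]

def StronglyMonotone (m : ℝ) (F : E → E) : Prop :=
  ∀ a b, m * ‖a - b‖ ^ 2 ≤ ⟪F a - F b, a - b⟫

namespace StronglyMonotone

variable {m : ℝ} {F G : E → E}

theorem id_add_smul (hF : StronglyMonotone m F) {γ : ℝ} (hγ : 0 ≤ γ) :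
    StronglyMonotone (1 + γ * m) (fun x => x + γ • F x) := by
  intro a b
  have hsplit : a + γ • F a - (b + γ • F b) = (a - b) + γ • (F a - F b) := by module
  rw [hsplit, inner_add_left, real_inner_smul_left, real_inner_self_eq_norm_sq]
  nlinarith [mul_le_mul_of_nonneg_left (hF a b) hγ]

theorem injective (hF : StronglyMonotone m F) (hm : 0 < m) : Function.Injective F := by
  intro a b hab
  have h := hF a b
  rw [hab, sub_self, inner_zero_left] at h
  have : ‖a - b‖ ^ 2 ≤ 0 := nonpos_of_mul_nonpos_right h hm
  simpa [sub_eq_zero] using this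

theorem lipschitzWith_of_rightInverse (hF : StronglyMonotone m F) (hm : 0 < m)
    (hG : Function.RightInverse G F) : LipschitzWith (Real.toNNReal m⁻¹) G := by
  refine LipschitzWith.of_dist_le' fun u w => ?_
  rw [dist_eq_norm, dist_eq_norm, inv_mul_eq_div, le_div_iff₀ hm]
  have h := hF (G u) (G w)
  rw [hG u, hG w] at h
  have hcs := real_inner_le_norm (u - w) (G u - G w)
  nlinarith [norm_nonneg (G u - G w), norm_nonneg (u - w)]

theorem le_inner_fderiv (hF : StronglyMonotone m F) {A : E →L[ℝ] E} {p : E}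
    (hA : HasFDerivAt F A p) (v : E) : m * ‖v‖ ^ 2 ≤ ⟪A v, v⟫ := by
  have hlim : Tendsto (fun c : ℝ => ⟪c • (F (p + c⁻¹ • v) - F p), v⟫) atTop (𝓝 ⟪A v, v⟫) :=
    (hA.lim_real v).inner tendsto_const_nhds
  refine ge_of_tendsto hlim ((eventually_gt_atTop 0).mono fun c hc => ?_)
  have h := hF (p + c⁻¹ • v) p
  rw [add_sub_cancel_left, norm_smul, real_inner_smul_right, Real.norm_eq_abs,
    abs_of_pos (inv_pos.2 hc)] at h
  rw [real_inner_smul_left]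
  have hc2 : 0 < c ^ 2 := by positivity
  calc m * ‖v‖ ^ 2 = c ^ 2 * (m * (c⁻¹ * ‖v‖) ^ 2) := by field_simp
    _ ≤ c ^ 2 * (c⁻¹ * ⟪F (p + c⁻¹ • v) - F p, v⟫) := mul_le_mul_of_nonneg_left h hc2.le
    _ = c * ⟪F (p + c⁻¹ • v) - F p, v⟫ := by field_simp

end StronglyMonotone

theorem IsProximalMap.moreauEnvelope_le {γ : ℝ} {g : E → ℝ} {prox : E → E}
    (hprox : IsProximalMap γ g prox) (u w : E) :
    moreauEnvelope γ g u ≤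
      moreauEnvelope γ g w + ⟪γ⁻¹ • (w - prox w), u - w⟫ + 1 / (2 * γ) * ‖u - w‖ ^ 2 := by
  have hsplit : ‖u - prox w‖ ^ 2 = ‖w - prox w‖ ^ 2 + 2 * ⟪w - prox w, u - w⟫ + ‖u - w‖ ^ 2 := by
    rw [← norm_add_sq_real]; congr 2; abel
  rw [hprox.moreauEnvelope_eq, hprox.moreauEnvelope_eq, real_inner_smul_left]
  calc 1 / (2 * γ) * ‖u - prox u‖ ^ 2 + g (prox u)
      ≤ 1 / (2 * γ) * ‖u - prox w‖ ^ 2 + g (prox w) := hprox u (prox w)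
    _ = _ := by rw [hsplit]; ring

variable [CompleteSpace E]

theorem ContinuousLinearMap.exists_equiv_of_coercive {A : E →L[ℝ] E} {m : ℝ} (hm : 0 < m)
    (hA : ∀ v, m * ‖v‖ ^ 2 ≤ ⟪A v, v⟫) : ∃ e : E ≃L[ℝ] E, (e : E →L[ℝ] E) = A := by
  have hB : IsCoercive ((innerSL ℝ).comp A) :=
    ⟨m, hm, fun u => by simpa [sq, mul_assoc, real_inner_comm] using hA u⟩
  refine ⟨hB.continuousLinearEquivOfBilin, ContinuousLinearMap.ext fun v => ?_⟩
  exact ext_inner_right ℝ fun w => by simp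

theorem StronglyMonotone.hasStrictFDerivAt_rightInverse {m : ℝ} {F G : E → E}
    (hF : StronglyMonotone m F) (hm : 0 < m) (hG : Function.RightInverse G F)
    {A : E →L[ℝ] E} {p : E} (hA : HasStrictFDerivAt F A p) :
    ∃ e : E ≃L[ℝ] E, (e : E →L[ℝ] E) = A ∧ HasStrictFDerivAt G (e.symm : E →L[ℝ] E) (F p) := by
  obtain ⟨e, rfl⟩ :=
    ContinuousLinearMap.exists_equiv_of_coercive hm (hF.le_inner_fderiv hA.hasFDerivAt)
  exact ⟨e, rfl, hA.to_local_left_inverse (.of_forall fun z => hF.injective hm (hG (F z)))⟩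

theorem ConvexOn.inner_gradient_le_sub {h : E → ℝ} (hconv : ConvexOn ℝ Set.univ h) {a b v : E}
    (ha : HasGradientAt h v a) : ⟪v, b - a⟫ ≤ h b - h a := by
  have hline : ConvexOn ℝ Set.univ (h ∘ AffineMap.lineMap (k := ℝ) a b) :=
    hconv.comp_affineMap (AffineMap.lineMap (k := ℝ) a b)
  have hderiv : HasDerivAt (h ∘ AffineMap.lineMap (k := ℝ) a b) ⟪v, b - a⟫ 0 := by
    have hv : HasFDerivAt h (InnerProductSpace.toDual ℝ E v) (AffineMap.lineMap a b (0 : ℝ)) := by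
      simpa using ha.hasFDerivAt
    simpa using hv.comp_hasDerivAt (0 : ℝ) AffineMap.hasDerivAt_lineMap
  simpa [slope_def_field] using
    hline.le_slope_of_hasDerivAt (Set.mem_univ 0) (Set.mem_univ 1) one_pos hderiv

theorem ConvexOn.stronglyMonotone_zero_of_hasGradientAt {h : E → ℝ} {h' : E → E}
    (hconv : ConvexOn ℝ Set.univ h) (hh' : ∀ x, HasGradientAt h (h' x) x) :
    StronglyMonotone 0 h' := by
  intro a b
  have hab := hconv.inner_gradient_le_sub (b := b) (hh' a)
  have hba := hconv.inner_gradient_le_sub (b := a) (hh' b)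
  rw [← neg_sub a b, inner_neg_right] at hab
  rw [inner_sub_left]
  linarith

theorem stronglyMonotone_neg_of_weaklyConvex {g : E → ℝ} {g' : E → E} {ρ : ℝ}
    (hweak : ConvexOn ℝ Set.univ (fun x => g x + ρ / 2 * ‖x‖ ^ 2))
    (hg' : ∀ x, HasGradientAt g (g' x) x) : StronglyMonotone (-ρ) g' := by
  have hgrad : ∀ x, HasGradientAt (fun x => g x + ρ / 2 * ‖x‖ ^ 2) (g' x + ρ • x) x := by
    intro x
    rw [hasGradientAt_iff_hasFDerivAt, map_add]
    refine ((hg' x).hasFDerivAt.add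
      ((hasStrictFDerivAt_norm_sq x).hasFDerivAt.const_mul (ρ / 2))).congr_fderiv ?_
    ext v
    simp only [add_apply, InnerProductSpace.toDual_apply_apply, smul_apply, coe_innerSL_apply,
      nsmul_eq_mul, Nat.cast_ofNat, smul_eq_mul, map_smul, add_right_inj]
    ring
  intro a b
  have hmono := hweak.stronglyMonotone_zero_of_hasGradientAt hgrad a b
  have hsplit : g' a + ρ • a - (g' b + ρ • b) = (g' a - g' b) + ρ • (a - b) := by module
  rw [hsplit, inner_add_left, real_inner_smul_left, real_inner_self_eq_norm_sq] at hmono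
  linarith

theorem hasGradientAt_of_forall_le_add_inner {f : E → ℝ} {v : E → E} {x : E} {C : ℝ}
    (hv : ContinuousAt v x) (hf : ∀ u w, f u ≤ f w + ⟪v w, u - w⟫ + C * ‖u - w‖ ^ 2) :
    HasGradientAt f (v x) x := by
  rw [hasGradientAt_iff_isLittleO, Asymptotics.isLittleO_iff]
  intro ε hε
  have hk : Tendsto (fun u => ‖v u - v x‖ + |C| * ‖u - x‖) (𝓝 x) (𝓝 0) := by
    have hvx := tendsto_iff_norm_sub_tendsto_zero.1 hv
    have hux := tendsto_iff_norm_sub_tendsto_zero.1 (tendsto_id (x := 𝓝 x))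
    simpa using hvx.add (hux.const_mul |C|)
  filter_upwards [hk.eventually (ge_mem_nhds hε)] with u hu
  have hup := hf u x
  have hlow := hf x u
  rw [← neg_sub u x, inner_neg_right, norm_neg] at hlow
  have hcs := abs_real_inner_le_norm (v u - v x) (u - x)
  rw [inner_sub_left, abs_le] at hcs
  have hC : C * ‖u - x‖ ^ 2 ≤ |C| * ‖u - x‖ ^ 2 :=
    mul_le_mul_of_nonneg_right (le_abs_self C) (sq_nonneg _)
  have hC' : -C * ‖u - x‖ ^ 2 ≤ |C| * ‖u - x‖ ^ 2 :=
    mul_le_mul_of_nonneg_right (neg_le_abs C) (sq_nonneg _)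
  calc ‖f u - f x - ⟪v x, u - x⟫‖ ≤ (‖v u - v x‖ + |C| * ‖u - x‖) * ‖u - x‖ := by
        rw [Real.norm_eq_abs, abs_le]
        constructor <;> linarith
    _ ≤ ε * ‖u - x‖ := mul_le_mul_of_nonneg_right hu (norm_nonneg _)

namespace IsProximalMap

variable {γ : ℝ} {g : E → ℝ} {prox : E → E}

theorem add_smul_gradient_eq (hprox : IsProximalMap γ g prox) (hγ : γ ≠ 0) {g' : E → E}
    (hg' : ∀ x, HasGradientAt g (g' x) x) (x : E) : prox x + γ • g' (prox x) = x := by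
  have hmin : IsLocalMin (fun y => 1 / (2 * γ) * ‖x - y‖ ^ 2 + g y) (prox x) :=
    Eventually.of_forall (hprox x)
  have hzero := hmin.hasFDerivAt_eq_zero
    ((((hasFDerivAt_id (prox x)).const_sub x).norm_sq.const_mul (1 / (2 * γ))).add
      (hg' (prox x)).hasFDerivAt)
  have hperp : γ⁻¹ • (prox x - x) + g' (prox x) = 0 := by
    refine ext_inner_right ℝ fun w => ?_
    have hw := congrArg (· w) hzero
    simp only [id_eq, map_sub, ContinuousLinearMap.comp_neg, ContinuousLinearMap.comp_id,
      add_apply, smul_apply, sub_apply, neg_apply, coe_innerSL_apply, nsmul_eq_mul, Nat.cast_ofNat,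
      smul_eq_mul, InnerProductSpace.toDual_apply_apply, zero_apply] at hw
    rw [inner_add_left, real_inner_smul_left, inner_sub_left, inner_zero_left]
    linear_combination hw
  calc prox x + γ • g' (prox x) = x + γ • (γ⁻¹ • (prox x - x) + g' (prox x)) := by
        rw [smul_add, smul_smul, mul_inv_cancel₀ hγ, one_smul]; abel
    _ = x := by rw [hperp, smul_zero, add_zero]

theorem hasGradientAt_moreauEnvelope (hprox : IsProximalMap γ g prox)
    (hcont : Continuous prox) (x : E) :
    HasGradientAt (moreauEnvelope γ g) (γ⁻¹ • (x - prox x)) x :=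
  hasGradientAt_of_forall_le_add_inner (v := fun z => γ⁻¹ • (z - prox z))
    (by fun_prop) hprox.moreauEnvelope_le

end IsProximalMap

theorem prox_derivative_and_moreau_hessian_general (d : ℕ) (ρ γ : ℝ)
    (hγ : 0 < γ) (hγρ : γ * ρ < 1)
    (g : EuclideanSpace ℝ (Fin d) → ℝ)
    (hweak : ConvexOn ℝ Set.univ (fun x => g x + ρ / 2 * ‖x‖ ^ 2))
    (g' : EuclideanSpace ℝ (Fin d) → EuclideanSpace ℝ (Fin d))
    (g'' : EuclideanSpace ℝ (Fin d) →
      (EuclideanSpace ℝ (Fin d) →L[ℝ] EuclideanSpace ℝ (Fin d)))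
    (hg' : ∀ x, HasGradientAt g (g' x) x)
    (hg'' : ∀ x, HasFDerivAt g' (g'' x) x)
    (hg''cont : Continuous g'')
    (prox : EuclideanSpace ℝ (Fin d) → EuclideanSpace ℝ (Fin d))
    (hprox : ∀ x y : EuclideanSpace ℝ (Fin d),
      1 / (2 * γ) * ‖x - prox x‖ ^ 2 + g (prox x)
        ≤ 1 / (2 * γ) * ‖x - y‖ ^ 2 + g y) :
    (∀ z : EuclideanSpace ℝ (Fin d),
      HasGradientAt
        (fun w : EuclideanSpace ℝ (Fin d) =>
          ⨅ y : EuclideanSpace ℝ (Fin d), 1 / (2 * γ) * ‖w - y‖ ^ 2 + g y)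
        (γ⁻¹ • (z - prox z)) z) ∧
    ∀ x : EuclideanSpace ℝ (Fin d),
      ∃ A : EuclideanSpace ℝ (Fin d) →L[ℝ] EuclideanSpace ℝ (Fin d),
        ((1 : EuclideanSpace ℝ (Fin d) →L[ℝ] EuclideanSpace ℝ (Fin d))
            + γ • g'' (prox x)) * A = 1 ∧
        A * ((1 : EuclideanSpace ℝ (Fin d) →L[ℝ] EuclideanSpace ℝ (Fin d))
            + γ • g'' (prox x)) = 1 ∧
        HasFDerivAt prox A x ∧
        HasFDerivAt (fun z : EuclideanSpace ℝ (Fin d) => γ⁻¹ • (z - prox z))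
          (γ⁻¹ • ((1 : EuclideanSpace ℝ (Fin d) →L[ℝ] EuclideanSpace ℝ (Fin d)) - A))
          x := by
  have hprox' : IsProximalMap γ g prox := hprox
  have hm : 0 < 1 - γ * ρ := by linarith
  have hF : StronglyMonotone (1 - γ * ρ) (fun y => y + γ • g' y) := by
    simpa [sub_eq_add_neg] using (stronglyMonotone_neg_of_weaklyConvex hweak hg').id_add_smul hγ.le
  have hright : Function.RightInverse prox (fun y => y + γ • g' y) :=
    hprox'.add_smul_gradient_eq hγ.ne' hg'
  refine ⟨hprox'.hasGradientAt_moreauEnvelope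
    (hF.lipschitzWith_of_rightInverse hm hright).continuous, fun x => ?_⟩
  have hFderiv : ∀ y, HasFDerivAt (fun y => y + γ • g' y) (1 + γ • g'' y) y :=
    fun y => (hasFDerivAt_id y).add ((hg'' y).const_smul γ)
  obtain ⟨e, he, hprox_deriv⟩ := hF.hasStrictFDerivAt_rightInverse hm hright
    (hasStrictFDerivAt_of_hasFDerivAt_of_continuousAt (.of_forall hFderiv)
      (by fun_prop : ContinuousAt (fun y => 1 + γ • g'' y) (prox x)))
  rw [show prox x + γ • g' (prox x) = x from hright x] at hprox_deriv
  refine ⟨e.symm, ?_, ?_, hprox_deriv.hasFDerivAt,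
    ((hasFDerivAt_id x).sub hprox_deriv.hasFDerivAt).const_smul γ⁻¹⟩
  · rw [← he]; ext; simp
  · rw [← he]; ext; simp

/-- For `g` ρ-weakly convex and twice continuously differentiable, with
`γρ < 1`, `γL_g < 1`, and `‖∇²g(z)‖ ≤ L_g` on the image of `Prox_{γg}`, the map
`I + γ∇²g(Prox_{γg}(x))` is invertible, `Prox_{γg}` is differentiable at every `x` with
derivative the inverse of that map, and the Moreau envelope is twice differentiable at
`x` with Hessian `(1/γ)(I − (I + γ∇²g(Prox_{γg}(x)))⁻¹)` (the Hessian being the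
derivative of the gradient map `z ↦ (1/γ)(z − Prox_{γg}(z))` of `g^γ`). -/
theorem prox_derivative_and_moreau_hessian (d : ℕ) (hd : 1 ≤ d) (ρ Lg γ : ℝ)
    (hρ : 0 < ρ) (hLg : 0 < Lg) (hγ : 0 < γ) (hγρ : γ * ρ < 1) (hγLg : γ * Lg < 1)
    (g : EuclideanSpace ℝ (Fin d) → ℝ)
    (hweak : ConvexOn ℝ Set.univ (fun x => g x + ρ / 2 * ‖x‖ ^ 2))
    (g' : EuclideanSpace ℝ (Fin d) → EuclideanSpace ℝ (Fin d))
    (g'' : EuclideanSpace ℝ (Fin d) →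
      (EuclideanSpace ℝ (Fin d) →L[ℝ] EuclideanSpace ℝ (Fin d)))
    (hg' : ∀ x, HasGradientAt g (g' x) x)
    (hg'' : ∀ x, HasFDerivAt g' (g'' x) x)
    (hg''cont : Continuous g'')
    (prox : EuclideanSpace ℝ (Fin d) → EuclideanSpace ℝ (Fin d))
    (hprox : ∀ x y : EuclideanSpace ℝ (Fin d),
      1 / (2 * γ) * ‖x - prox x‖ ^ 2 + g (prox x)
        ≤ 1 / (2 * γ) * ‖x - y‖ ^ 2 + g y)
    (hbound : ∀ z ∈ Set.range prox, ‖g'' z‖ ≤ Lg) :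
    (∀ z : EuclideanSpace ℝ (Fin d),
      HasGradientAt
        (fun w : EuclideanSpace ℝ (Fin d) =>
          ⨅ y : EuclideanSpace ℝ (Fin d), 1 / (2 * γ) * ‖w - y‖ ^ 2 + g y)
        (γ⁻¹ • (z - prox z)) z) ∧
    ∀ x : EuclideanSpace ℝ (Fin d),
      ∃ A : EuclideanSpace ℝ (Fin d) →L[ℝ] EuclideanSpace ℝ (Fin d),
        ((1 : EuclideanSpace ℝ (Fin d) →L[ℝ] EuclideanSpace ℝ (Fin d))
            + γ • g'' (prox x)) * A = 1 ∧
        A * ((1 : EuclideanSpace ℝ (Fin d) →L[ℝ] EuclideanSpace ℝ (Fin d))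
            + γ • g'' (prox x)) = 1 ∧
        HasFDerivAt prox A x ∧
        HasFDerivAt (fun z : EuclideanSpace ℝ (Fin d) => γ⁻¹ • (z - prox z))
          (γ⁻¹ • ((1 : EuclideanSpace ℝ (Fin d) →L[ℝ] EuclideanSpace ℝ (Fin d)) - A))
          x :=
  prox_derivative_and_moreau_hessian_general d ρ γ hγ hγρ g hweak g' g'' hg' hg'' hg''cont prox
    hprox
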